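/- Let b, k > 0, λ_p, λ_c < 0, and c₁, c₂ > 0. Define V : ℝ² → ℝ by V(x_p, x_c) = c₁·x_p·arctan(x_p) + c₂·x_c·arctan(x_c), and define f : ℝ² × ℝ → ℝ² by f((x_p,x_c), w) = (λ_p·arctan(x_p) + b·arctan(x_c) + w, λ_c·arctan(x_c) + k·arctan(x_p)). Then for all (x_p, x_c) ∈ ℝ² and all w ∈ ℝ, ⟨∇V(x_p,x_c), f((x_p,x_c), w)⟩ ≤ (c₁λ_p + b c₁ + k c₂)·(arctan x_p)² + (c₂λ_c + k c₂ + b c₁)·(arctan x_c)² + (c₁(π+1)/2)·|w|. -/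

import Mathlib

/-- The candidate iISS Lyapunov function `V(x_p, x_c) = c₁ x_p arctan x_p + c₂ x_c arctan x_c`
for the reset control system. -/
noncomputable def Vres (c1 c2 : ℝ) (x : EuclideanSpace ℝ (Fin 2)) : ℝ :=
  c1 * x 0 * Real.arctan (x 0) + c2 * x 1 * Real.arctan (x 1)

/-- The flow map of the reset control system. -/
noncomputable def fres (b k lp lc : ℝ) (xp xc w : ℝ) : EuclideanSpace ℝ (Fin 2) :=
  WithLp.toLp 2 ![lp * Real.arctan xp + b * Real.arctan xc + w,
    lc * Real.arctan xc + k * Real.arctan xp]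

/-!
Writing `θ = arctan s`, the derivative of `s ↦ s arctan s` is `θ + s / (1 + s²)`, and
`s / (1 + s²) = sin θ cos θ = sin (2θ) / 2`. Hence the second summand has the sign of `θ`, modulus at
most `min (1/2) |θ|`, so the derivative times `θ` is at least `θ²`. Expanding `⟨∇V, f⟩`, the
`λ`-terms are dissipative, the cross terms are absorbed by Young's inequality into
`(arctan x_p)² + (arctan x_c)²`, and the disturbance term is bounded by `(π/2 + 1/2) |w|`.
-/

open Real

noncomputable def mulArctanDeriv (s : ℝ) : ℝ := arctan s + s / (1 + s ^ 2)

lemma hasDerivAt_mul_arctan (s : ℝ) :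
    HasDerivAt (fun t => t * arctan t) (mulArctanDeriv s) s := by
  refine ((hasDerivAt_id' s).mul (hasDerivAt_arctan s)).congr_deriv ?_
  rw [mulArctanDeriv]; ring

lemma div_one_add_sq_eq_sin_two_mul_arctan (s : ℝ) :
    s / (1 + s ^ 2) = sin (2 * arctan s) / 2 := by
  have h : √(1 + s ^ 2) ^ 2 = 1 + s ^ 2 := sq_sqrt (by positivity)
  rw [sin_two_mul, sin_arctan, cos_arctan]
  field_simp
  rw [h]

lemma abs_div_one_add_sq_le_half (s : ℝ) : |s / (1 + s ^ 2)| ≤ 1 / 2 := by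
  rw [div_one_add_sq_eq_sin_two_mul_arctan, abs_div, abs_two]
  linarith [abs_sin_le_one (2 * arctan s)]

lemma abs_div_one_add_sq_le_abs_arctan (s : ℝ) : |s / (1 + s ^ 2)| ≤ |arctan s| := by
  rw [div_one_add_sq_eq_sin_two_mul_arctan, abs_div, abs_two]
  have := abs_sin_le_abs (x := 2 * arctan s)
  rw [abs_mul, abs_two] at this
  linarith

lemma mul_arctan_nonneg (s : ℝ) : 0 ≤ s * arctan s := by
  rcases le_total 0 s with h | h
  · exact mul_nonneg h (arctan_nonneg.2 h)
  · exact mul_nonneg_of_nonpos_of_nonpos h (arctan_le_zero.2 h)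

lemma sq_arctan_le_mulArctanDeriv_mul (s : ℝ) : arctan s ^ 2 ≤ mulArctanDeriv s * arctan s := by
  have hsign : 0 ≤ s / (1 + s ^ 2) * arctan s := by
    rw [div_mul_eq_mul_div]; exact div_nonneg (mul_arctan_nonneg s) (by positivity)
  rw [mulArctanDeriv]; nlinarith

lemma mulArctanDeriv_mul_le (s t : ℝ) : mulArctanDeriv s * t ≤ arctan s ^ 2 + t ^ 2 := by
  have h : (s / (1 + s ^ 2)) ^ 2 ≤ arctan s ^ 2 :=
    sq_le_sq.2 (abs_div_one_add_sq_le_abs_arctan s)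
  rw [mulArctanDeriv]
  nlinarith [sq_nonneg (arctan s - t), sq_nonneg (s / (1 + s ^ 2) - t)]

lemma abs_mulArctanDeriv_le (s : ℝ) : |mulArctanDeriv s| ≤ (π + 1) / 2 := by
  have htri := abs_add_le (arctan s) (s / (1 + s ^ 2))
  have hfrac := abs_div_one_add_sq_le_half s
  have harctan := abs_le.2 ⟨(neg_pi_div_two_lt_arctan s).le, (arctan_lt_pi_div_two s).le⟩
  rw [mulArctanDeriv]; linarith

lemma mulArctanDeriv_mul_le_abs (s w : ℝ) : mulArctanDeriv s * w ≤ (π + 1) / 2 * |w| :=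
  calc mulArctanDeriv s * w ≤ |mulArctanDeriv s| * |w| := by rw [← abs_mul]; exact le_abs_self _
    _ ≤ (π + 1) / 2 * |w| := by gcongr; exact abs_mulArctanDeriv_le s

lemma hasFDerivAt_Vres (c1 c2 : ℝ) (x : EuclideanSpace ℝ (Fin 2)) :
    HasFDerivAt (Vres c1 c2)
      ((c1 * mulArctanDeriv (x 0)) • EuclideanSpace.proj (𝕜 := ℝ) 0
        + (c2 * mulArctanDeriv (x 1)) • EuclideanSpace.proj (𝕜 := ℝ) 1) x := by
  have hV : Vres c1 c2 = fun y => c1 * (y 0 * arctan (y 0)) + c2 * (y 1 * arctan (y 1)) := by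
    funext y; simp only [Vres, mul_assoc]
  rw [hV]
  exact (((hasDerivAt_mul_arctan _).const_mul c1).comp_hasFDerivAt x
      (EuclideanSpace.proj (𝕜 := ℝ) (ι := Fin 2) 0).hasFDerivAt).add
    (((hasDerivAt_mul_arctan _).const_mul c2).comp_hasFDerivAt x
      (EuclideanSpace.proj (𝕜 := ℝ) (ι := Fin 2) 1).hasFDerivAt)

lemma inner_gradient_Vres (c1 c2 : ℝ) (x v : EuclideanSpace ℝ (Fin 2)) :
    inner ℝ (gradient (Vres c1 c2) x) v
      = c1 * mulArctanDeriv (x 0) * v 0 + c2 * mulArctanDeriv (x 1) * v 1 := by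
  rw [gradient, InnerProductSpace.toDual_symm_apply, (hasFDerivAt_Vres c1 c2 x).fderiv]
  simp [mul_assoc]

/-- The flow estimate (eq. (22) of the paper): for all states and disturbances,
`⟨∇V(x), f(x,w)⟩ ≤ (c₁λ_p + bc₁ + kc₂)(arctan x_p)² + (c₂λ_c + kc₂ + bc₁)(arctan x_c)²
 + (c₁(π+1)/2)|w|`. -/
theorem reset_flow_estimate (b k lp lc c1 c2 : ℝ)
    (hb : 0 < b) (hk : 0 < k) (hlp : lp < 0) (hlc : lc < 0)
    (hc1 : 0 < c1) (hc2 : 0 < c2) :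
    ∀ xp xc w : ℝ,
      inner (𝕜 := ℝ) (gradient (Vres c1 c2) (WithLp.toLp 2 ![xp, xc] : EuclideanSpace ℝ (Fin 2)))
          (fres b k lp lc xp xc w)
        ≤ (c1 * lp + b * c1 + k * c2) * (Real.arctan xp) ^ 2
          + (c2 * lc + k * c2 + b * c1) * (Real.arctan xc) ^ 2
          + (c1 * (Real.pi + 1) / 2) * |w| := by
  intro xp xc w
  rw [inner_gradient_Vres]
  simp only [fres, PiLp.toLp_apply, Matrix.cons_val_zero, Matrix.cons_val_one]
  have hdamp_p := mul_le_mul_of_nonpos_left (sq_arctan_le_mulArctanDeriv_mul xp)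
    (mul_nonpos_of_nonneg_of_nonpos hc1.le hlp.le)
  have hdamp_c := mul_le_mul_of_nonpos_left (sq_arctan_le_mulArctanDeriv_mul xc)
    (mul_nonpos_of_nonneg_of_nonpos hc2.le hlc.le)
  have hcross_p :=
    mul_le_mul_of_nonneg_left (mulArctanDeriv_mul_le xp (arctan xc)) (mul_pos hc1 hb).le
  have hcross_c :=
    mul_le_mul_of_nonneg_left (mulArctanDeriv_mul_le xc (arctan xp)) (mul_pos hc2 hk).le
  have hdist := mul_le_mul_of_nonneg_left (mulArctanDeriv_mul_le_abs xp w) hc1.le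
  linear_combination hdamp_p + hdamp_c + hcross_p + hcross_c + hdist
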